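/- Let n ≥ 2, let τ₁, …, τ_{n−1} be 2×2 real orthogonal matrices, and let Q' be the augmented reflection-based Laplacian on ℝ^{2n} with designated index ℓ and unit normal n̂. Let v : ℝ → ℝ², ω : ℝ → ℝ, α : ℝ → ℝ be continuous, and let r : ℝ → ℝ², θ : ℝ → ℝ, s : ℝ → ℝ be differentiable with ṙ(t) = v(t), θ̇(t) = ω(t), ṡ(t) = α(t)s(t), and s(t) > 0 for all t. Write R(t) = R(θ(t)), Ω(t) = ω(t)·[[0,−1],[1,0]], and for a configuration p(t) ∈ ℝ^{2n} set c(t) = p(t) − 𝟙ₙ⊗r(t). Suppose p : ℝ → ℝ^{2n} is differentiable and satisfies the maneuvering control law ṗ(t) = −(Iₙ⊗R(t))Q'(Iₙ⊗R(t))ᵀ c(t) + 𝟙ₙ⊗v(t) + (Iₙ⊗Ω(t) + α(t)I_{2n}) c(t). Then the transformed state ζ(t) = s(t)⁻¹ (Iₙ⊗R(t)ᵀ) c(t) satisfies ζ̇(t) = −Q'ζ(t) for all t. -/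

import Mathlib

open Filter Topology Matrix

noncomputable section

abbrev Cfg (n : ℕ) := EuclideanSpace ℝ (Fin n × Fin 2)

/-- Multiplication of a 2×2 matrix with a planar vector. -/
def mv (M : Matrix (Fin 2) (Fin 2) ℝ) (v : EuclideanSpace ℝ (Fin 2)) :
    EuclideanSpace ℝ (Fin 2) := WithLp.toLp 2 (M.mulVec v)

/-- Multiplication of a 2n×2n matrix with a configuration vector. -/
def mvC {n : ℕ} (M : Matrix (Fin n × Fin 2) (Fin n × Fin 2) ℝ) (v : Cfg n) : Cfg n :=
  WithLp.toLp 2 (M.mulVec v)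

/-- The i-th planar component of a configuration. -/
def blk {n : ℕ} (p : Cfg n) (i : Fin n) : EuclideanSpace ℝ (Fin 2) :=
  WithLp.toLp 2 (fun a : Fin 2 => p (i, a))

/-- The action of the matrix-weighted Laplacian Q of the path graph on vertices 0, …, n-1
(with matrix weight τ e on the edge {e, e+1}):
(Qp)ᵢ = (pᵢ − τ_{i-1} p_{i-1}) + (pᵢ − τᵢᵀ p_{i+1}), where the first summand is omitted
for the first vertex and the second for the last. -/
def lapAct (n : ℕ) (τ : Fin (n - 1) → Matrix (Fin 2) (Fin 2) ℝ)
    (p : Fin n → EuclideanSpace ℝ (Fin 2)) (i : Fin n) : EuclideanSpace ℝ (Fin 2) :=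
  (if h : 0 < (i : ℕ) then
      p i - mv (τ ⟨(i : ℕ) - 1, by have := i.isLt; omega⟩)
        (p ⟨(i : ℕ) - 1, by have := i.isLt; omega⟩)
    else 0)
  + (if h : (i : ℕ) + 1 < n then
      p i - mv (τ ⟨(i : ℕ), by omega⟩)ᵀ (p ⟨(i : ℕ) + 1, h⟩)
    else 0)

/-- The action of the augmented reflection-based Laplacian Q', with designated index ℓ and
unit normal n̂: (Q'p)ᵢ = (Qp)ᵢ + [i = ℓ]·2(n̂·p_ℓ)n̂. -/
def lapAugAct (n : ℕ) (τ : Fin (n - 1) → Matrix (Fin 2) (Fin 2) ℝ) (ℓ : Fin n)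
    (nh : EuclideanSpace ℝ (Fin 2)) (p : Fin n → EuclideanSpace ℝ (Fin 2)) (i : Fin n) :
    EuclideanSpace ℝ (Fin 2) :=
  lapAct n τ p i + if i = ℓ then (2 * (inner ℝ nh (p ℓ) : ℝ)) • nh else 0

/-- V₀ = (S₁ L̂, …, Sₙ L̂). -/
def V0 {n : ℕ} (S : Fin n → Matrix (Fin 2) (Fin 2) ℝ) (L : EuclideanSpace ℝ (Fin 2)) : Cfg n :=
  WithLp.toLp 2 (fun x : Fin n × Fin 2 => mv (S x.1) L x.2)

/-- Left endpoint of edge e of the path graph, as a vertex. -/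
def eL {n : ℕ} (e : Fin (n - 1)) : Fin n := ⟨e, by have := e.isLt; omega⟩
/-- Right endpoint of edge e of the path graph, as a vertex. -/
def eR {n : ℕ} (e : Fin (n - 1)) : Fin n := ⟨(e : ℕ) + 1, by have := e.isLt; omega⟩

/-- The 2×2 rotation matrix R(θ) = [[cos θ, −sin θ],[sin θ, cos θ]]. -/
def Rot (θ : ℝ) : Matrix (Fin 2) (Fin 2) ℝ :=
  !![Real.cos θ, -Real.sin θ; Real.sin θ, Real.cos θ]

/-- Ω = ω·[[0,−1],[1,0]]. -/
def Omat (w : ℝ) : Matrix (Fin 2) (Fin 2) ℝ := w • !![0, -1; 1, 0]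

/-- The block-diagonal operator Iₙ ⊗ M applying a 2×2 matrix M to each planar component. -/
def kron {n : ℕ} (M : Matrix (Fin 2) (Fin 2) ℝ) (q : Cfg n) : Cfg n :=
  WithLp.toLp 2 (fun x : Fin n × Fin 2 => mv M (blk q x.1) x.2)

/-- The configuration 𝟙ₙ ⊗ r whose every planar component equals r. -/
def ones {n : ℕ} (r : EuclideanSpace ℝ (Fin 2)) : Cfg n := WithLp.toLp 2 (fun x : Fin n × Fin 2 => r x.2)

/-- The transformed state ζ(t) = s(t)⁻¹ (Iₙ⊗R(θ(t))ᵀ)(p(t) − 𝟙ₙ⊗r(t)). -/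
def zetaFn {n : ℕ} (θs sc : ℝ → ℝ) (r : ℝ → EuclideanSpace ℝ (Fin 2)) (p : ℝ → Cfg n)
    (t : ℝ) : Cfg n :=
  (sc t)⁻¹ • kron (Rot (θs t))ᵀ (p t - ones (r t))

/-! Differentiating `Rᵀ c` produces `Rᵀ ċ - ω Rᵀ J c`, with `J` the quarter turn. Feeding in the
control law, `Rᵀ R = 1` leaves `-Q' Rᵀ c`, the rotation term `Rᵀ Ω c = ω Rᵀ J c` cancels the
derivative of the frame, and the translation term cancels `ṙ`. What remains is
`-Q' Rᵀ c + α Rᵀ c`, and differentiating `s⁻¹` removes the `α` term again, since `ṡ = α s`. -/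

def quarterTurn : Matrix (Fin 2) (Fin 2) ℝ := !![0, -1; 1, 0]

lemma quarterTurn_mul_self : quarterTurn * quarterTurn = -1 := by
  ext i j; fin_cases i <;> fin_cases j <;> simp [quarterTurn]

lemma omat_eq_smul_quarterTurn (w : ℝ) : Omat w = w • quarterTurn := rfl

lemma rot_transpose_eq (θ : ℝ) :
    (Rot θ)ᵀ = Real.cos θ • (1 : Matrix (Fin 2) (Fin 2) ℝ) - Real.sin θ • quarterTurn := by
  ext i j; fin_cases i <;> fin_cases j <;> simp [Rot, quarterTurn]

lemma rot_transpose_mul_self (θ : ℝ) : (Rot θ)ᵀ * Rot θ = 1 := by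
  ext i j; fin_cases i <;> fin_cases j <;>
    simp [Rot, Matrix.mul_apply, Fin.sum_univ_two] <;> nlinarith [Real.sin_sq_add_cos_sq θ]

section Kron

variable {n : ℕ}

lemma kron_apply (M : Matrix (Fin 2) (Fin 2) ℝ) (q : Cfg n) (i : Fin n) (a : Fin 2) :
    kron M q (i, a) = (M *ᵥ blk q i) a := rfl

lemma blk_kron (M : Matrix (Fin 2) (Fin 2) ℝ) (q : Cfg n) (i : Fin n) :
    blk (kron M q) i = mv M (blk q i) := rfl

def kronCLM (n : ℕ) (M : Matrix (Fin 2) (Fin 2) ℝ) : Cfg n →L[ℝ] Cfg n :=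
  LinearMap.toContinuousLinearMap
    { toFun := kron M
      map_add' := fun q q' => by
        ext ⟨i, a⟩
        change (M *ᵥ (blk q i + blk q' i)) a = (M *ᵥ blk q i) a + (M *ᵥ blk q' i) a
        rw [Matrix.mulVec_add, Pi.add_apply]
      map_smul' := fun c q => by
        ext ⟨i, a⟩
        change (M *ᵥ (c • blk q i)) a = c * (M *ᵥ blk q i) a
        rw [Matrix.mulVec_smul, Pi.smul_apply, smul_eq_mul] }

lemma kron_add (M : Matrix (Fin 2) (Fin 2) ℝ) (q q' : Cfg n) :
    kron M (q + q') = kron M q + kron M q' := (kronCLM n M).map_add q q'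

lemma kron_neg (M : Matrix (Fin 2) (Fin 2) ℝ) (q : Cfg n) : kron M (-q) = -kron M q :=
  (kronCLM n M).map_neg q

lemma kron_smul (M : Matrix (Fin 2) (Fin 2) ℝ) (c : ℝ) (q : Cfg n) :
    kron M (c • q) = c • kron M q := (kronCLM n M).map_smul c q

lemma kron_sub_left (M N : Matrix (Fin 2) (Fin 2) ℝ) (q : Cfg n) :
    kron (M - N) q = kron M q - kron N q := by
  ext ⟨i, a⟩; simp only [kron_apply, PiLp.sub_apply, Matrix.sub_mulVec, Pi.sub_apply]

lemma kron_smul_left (c : ℝ) (M : Matrix (Fin 2) (Fin 2) ℝ) (q : Cfg n) :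
    kron (c • M) q = c • kron M q := by
  ext ⟨i, a⟩; simp only [kron_apply, PiLp.smul_apply, Matrix.smul_mulVec, Pi.smul_apply]

lemma kron_one (q : Cfg n) : kron 1 q = q := by
  ext ⟨i, a⟩; simp only [kron_apply, Matrix.one_mulVec]; rfl

lemma kron_neg_one (q : Cfg n) : kron (-1) q = -q := by
  rw [← neg_one_smul ℝ (1 : Matrix (Fin 2) (Fin 2) ℝ), kron_smul_left, kron_one, neg_one_smul]

lemma kron_mul (M N : Matrix (Fin 2) (Fin 2) ℝ) (q : Cfg n) :
    kron (M * N) q = kron M (kron N q) := by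
  ext ⟨i, a⟩; simp only [kron_apply, blk_kron, mv, ← Matrix.mulVec_mulVec]

lemma kron_rot_transpose_kron_rot (θ : ℝ) (q : Cfg n) :
    kron (Rot θ)ᵀ (kron (Rot θ) q) = q := by
  rw [← kron_mul, rot_transpose_mul_self, kron_one]

end Kron

lemma mvC_smul {n : ℕ} (Qm : Matrix (Fin n × Fin 2) (Fin n × Fin 2) ℝ) (c : ℝ) (q : Cfg n) :
    mvC Qm (c • q) = c • mvC Qm q :=
  congrArg (WithLp.toLp 2) (Matrix.mulVec_smul Qm c q.ofLp)

section Derivatives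

variable {n : ℕ} {t : ℝ}

def onesCLM (n : ℕ) : EuclideanSpace ℝ (Fin 2) →L[ℝ] Cfg n :=
  LinearMap.toContinuousLinearMap
    { toFun := ones
      map_add' := fun _ _ => rfl
      map_smul' := fun _ _ => rfl }

lemma HasDerivAt.ones {r : ℝ → EuclideanSpace ℝ (Fin 2)} {r' : EuclideanSpace ℝ (Fin 2)}
    (hr : HasDerivAt r r' t) : HasDerivAt (fun u => (ones (r u) : Cfg n)) (ones r') t :=
  (onesCLM n).hasFDerivAt.comp_hasDerivAt t hr

lemma HasDerivAt.kron (M : Matrix (Fin 2) (Fin 2) ℝ) {c : ℝ → Cfg n} {c' : Cfg n}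
    (hc : HasDerivAt c c' t) : HasDerivAt (fun u => kron M (c u)) (kron M c') t :=
  (kronCLM n M).hasFDerivAt.comp_hasDerivAt t hc

lemma hasDerivAt_kron_rot_transpose {θ : ℝ → ℝ} {ω : ℝ} {c : ℝ → Cfg n} {c' : Cfg n}
    (hθ : HasDerivAt θ ω t) (hc : HasDerivAt c c' t) :
    HasDerivAt (fun u => kron (Rot (θ u))ᵀ (c u))
      (kron (Rot (θ t))ᵀ c' - ω • kron ((Rot (θ t))ᵀ * quarterTurn) (c t)) t := by
  simp only [rot_transpose_eq, sub_mul, smul_mul_assoc, one_mul, quarterTurn_mul_self,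
    kron_sub_left, kron_smul_left, kron_one, kron_neg_one]
  exact ((hθ.cos.smul hc).sub (hθ.sin.smul (hc.kron quarterTurn))).congr_deriv (by module)

end Derivatives

theorem stmt10_general (n : ℕ)
    (Qm : Matrix (Fin n × Fin 2) (Fin n × Fin 2) ℝ)
    (v : ℝ → EuclideanSpace ℝ (Fin 2)) (ω α : ℝ → ℝ)
    (r : ℝ → EuclideanSpace ℝ (Fin 2)) (θs sc : ℝ → ℝ)
    (hr : ∀ t, HasDerivAt r (v t) t)
    (hθ : ∀ t, HasDerivAt θs (ω t) t)
    (hs : ∀ t, HasDerivAt sc (α t * sc t) t)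
    (hspos : ∀ t, 0 < sc t)
    (p : ℝ → Cfg n)
    (hp : ∀ t, HasDerivAt p
      (-(kron (Rot (θs t)) (mvC Qm (kron (Rot (θs t))ᵀ (p t - ones (r t)))))
        + ones (v t)
        + (kron (Omat (ω t)) (p t - ones (r t)) + α t • (p t - ones (r t)))) t) :
    ∀ t, HasDerivAt (zetaFn θs sc r p) (-(mvC Qm (zetaFn θs sc r p t))) t := by
  intro t
  set c : ℝ → Cfg n := fun u => p u - ones (r u)
  set q := kron (Rot (θs t))ᵀ (c t)
  have hc : HasDerivAt c (-(kron (Rot (θs t)) (mvC Qm q))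
      + (kron (Omat (ω t)) (c t) + α t • c t)) t :=
    ((hp t).sub (hr t).ones).congr_deriv (by abel)
  have hq : HasDerivAt (fun u => kron (Rot (θs u))ᵀ (c u)) (-(mvC Qm q) + α t • q) t := by
    refine (hasDerivAt_kron_rot_transpose (hθ t) hc).congr_deriv ?_
    simp only [kron_add, kron_neg, kron_smul, kron_rot_transpose_kron_rot,
      omat_eq_smul_quarterTurn, kron_smul_left, kron_mul, q]
    abel
  have hs' : sc t ≠ 0 := (hspos t).ne'
  refine (((hs t).inv hs').smul hq).congr_deriv ?_
  have hinv : -(α t * sc t) / sc t ^ 2 = -(α t * (sc t)⁻¹) := by field_simp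
  rw [zetaFn, mvC_smul, hinv, Pi.inv_apply]
  module

/-- Under the maneuvering control law
ṗ = −(Iₙ⊗R)Q'(Iₙ⊗R)ᵀc + 𝟙ₙ⊗v + (Iₙ⊗Ω + αI)c with c = p − 𝟙ₙ⊗r, where ṙ = v, θ̇ = ω,
ṡ = αs, s > 0, the transformed state ζ(t) = s(t)⁻¹(Iₙ⊗R(t)ᵀ)c(t) satisfies ζ̇ = −Q'ζ. -/
theorem stmt10 (n : ℕ) (hn : 2 ≤ n)
    (τ : Fin (n - 1) → Matrix (Fin 2) (Fin 2) ℝ)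
    (hτ : ∀ e, (τ e)ᵀ * τ e = 1)
    (ℓ : Fin n) (nh : EuclideanSpace ℝ (Fin 2)) (hnh : ‖nh‖ = 1)
    (Qm : Matrix (Fin n × Fin 2) (Fin n × Fin 2) ℝ)
    (hQm : ∀ (p : Cfg n) (i : Fin n) (a : Fin 2),
      mvC Qm p (i, a) = lapAugAct n τ ℓ nh (blk p) i a)
    (v : ℝ → EuclideanSpace ℝ (Fin 2)) (ω α : ℝ → ℝ)
    (hv : Continuous v) (hω : Continuous ω) (hα : Continuous α)
    (r : ℝ → EuclideanSpace ℝ (Fin 2)) (θs sc : ℝ → ℝ)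
    (hr : ∀ t, HasDerivAt r (v t) t)
    (hθ : ∀ t, HasDerivAt θs (ω t) t)
    (hs : ∀ t, HasDerivAt sc (α t * sc t) t)
    (hspos : ∀ t, 0 < sc t)
    (p : ℝ → Cfg n)
    (hp : ∀ t, HasDerivAt p
      (-(kron (Rot (θs t)) (mvC Qm (kron (Rot (θs t))ᵀ (p t - ones (r t)))))
        + ones (v t)
        + (kron (Omat (ω t)) (p t - ones (r t)) + α t • (p t - ones (r t)))) t) :
    ∀ t, HasDerivAt (zetaFn θs sc r p) (-(mvC Qm (zetaFn θs sc r p t))) t :=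
  stmt10_general n Qm v ω α r θs sc hr hθ hs hspos p hp
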